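/- arXiv:2104.04615 — 3 statements merged into one kernel-verified Lean document; each statement's English description precedes it below -/
import Mathlib

section
/- Let K, N be positive integers, H ∈ ℂ^{K×N}, D ∈ ℂ^{K×K} with ‖D‖_F² ≤ ‖H‖_F², and let P^w > 0, P^max > 0 and λ° > 0 be real numbers. Suppose HᴴH + λ°I_N is invertible and the matrix V° = √(P^w) (HᴴH + λ°I_N)⁻¹ Hᴴ D satisfies ‖V°‖_F² = P^max. Then λ° ≤ ‖H‖_F² · √(N · P^w / P^max). (Paper's Proposition 1: the optimal Lagrange multiplier of the single-cell precoding deviation minimization problem lies in the interval (0, ‖H‖_F² √(N P^w / P^max)].) -/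
/-! With `B = (HᴴH + λI)⁻¹Hᴴ` we have `V° = √P^w B D`, and `(HᴴH + λI)B = Hᴴ` gives
`‖HB‖² + λ‖B‖² = Re tr(BH) ≤ √N ‖BH‖ ≤ √N ‖B‖‖H‖`, hence `λ‖B‖ ≤ √N ‖H‖`. On the other hand
`√P^max = √P^w ‖BD‖ ≤ √P^w ‖B‖‖H‖` bounds `‖B‖` from below, and the two bounds combine. -/

open Matrix BigOperators

noncomputable def frobSq {m n : Type*} [Fintype m] [Fintype n] (A : Matrix m n ℂ) : ℝ :=
  ∑ i, ∑ j, ‖A i j‖ ^ 2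

attribute [local instance] Matrix.frobeniusNormedAddCommGroup Matrix.frobeniusNormSMulClass

section

variable {m n : Type*} [Fintype m] [Fintype n]

theorem frobSq_eq_norm_sq (A : Matrix m n ℂ) : frobSq A = ‖A‖ ^ 2 := by
  rw [frobenius_norm_def, ← Real.rpow_natCast, ← Real.rpow_mul (by positivity)]
  norm_num [frobSq]

theorem re_trace_conjTranspose_mul_self (X : Matrix m n ℂ) : (Xᴴ * X).trace.re = ‖X‖ ^ 2 := by
  rw [← frobSq_eq_norm_sq, frobSq, Finset.sum_comm]
  simp [trace, mul_apply, Complex.re_sum, ← Complex.normSq_eq_norm_sq, Complex.normSq_apply]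

theorem re_trace_le_sqrt_card_mul_norm (M : Matrix n n ℂ) :
    M.trace.re ≤ √(Fintype.card n) * ‖M‖ := by
  calc M.trace.re ≤ ∑ i, 1 * ‖M i i‖ := by
        simpa [trace, Complex.re_sum] using Finset.sum_le_sum fun i _ => Complex.re_le_norm (M i i)
    _ ≤ √(∑ i : n, 1 ^ 2) * √(∑ i, ‖M i i‖ ^ 2) := Real.sum_mul_le_sqrt_mul_sqrt _ _ _
    _ ≤ √(Fintype.card n) * ‖M‖ := by
        rw [← Real.sqrt_sq (norm_nonneg M), ← frobSq_eq_norm_sq]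
        simp only [one_pow, Finset.sum_const, Finset.card_univ, nsmul_eq_mul, mul_one]
        gcongr
        exact Finset.sum_le_sum fun i _ => Finset.single_le_sum (f := fun j => ‖M i j‖ ^ 2)
          (fun _ _ => by positivity) (Finset.mem_univ i)

variable [DecidableEq n]

noncomputable def tikhonovInverse (H : Matrix m n ℂ) (lam : ℝ) : Matrix n m ℂ :=
  (Hᴴ * H + (lam : ℂ) • (1 : Matrix n n ℂ))⁻¹ * Hᴴ

theorem norm_mul_tikhonovInverse_sq_add {H : Matrix m n ℂ} {lam : ℝ}
    (hA : IsUnit (Hᴴ * H + (lam : ℂ) • (1 : Matrix n n ℂ))) :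
    ‖H * tikhonovInverse H lam‖ ^ 2 + lam * ‖tikhonovInverse H lam‖ ^ 2 =
      (tikhonovInverse H lam * H).trace.re := by
  have hAB : (Hᴴ * H + (lam : ℂ) • 1) * tikhonovInverse H lam = Hᴴ := by
    rw [tikhonovInverse, ← Matrix.mul_assoc, mul_nonsing_inv _ ((isUnit_iff_isUnit_det _).mp hA),
      Matrix.one_mul]
  set B := tikhonovInverse H lam
  have hBH : Bᴴ * Hᴴ = (H * B)ᴴ * (H * B) + (lam : ℂ) • (Bᴴ * B) := by
    rw [← hAB]
    simp only [conjTranspose_mul, Matrix.add_mul, Matrix.mul_add, Matrix.smul_mul,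
      Matrix.mul_smul, Matrix.one_mul, Matrix.mul_assoc]
  calc ‖H * B‖ ^ 2 + lam * ‖B‖ ^ 2 = (Bᴴ * Hᴴ).trace.re := by
        rw [hBH, trace_add, trace_smul, Complex.add_re, smul_eq_mul, Complex.re_ofReal_mul,
          re_trace_conjTranspose_mul_self, re_trace_conjTranspose_mul_self]
    _ = (B * H).trace.re := by
        rw [← conjTranspose_mul, trace_conjTranspose, trace_mul_comm]
        exact Complex.conj_re _

theorem mul_norm_tikhonovInverse_le {H : Matrix m n ℂ} {lam : ℝ}
    (hA : IsUnit (Hᴴ * H + (lam : ℂ) • (1 : Matrix n n ℂ))) :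
    lam * ‖tikhonovInverse H lam‖ ≤ √(Fintype.card n) * ‖H‖ := by
  set B := tikhonovInverse H lam
  have key : lam * ‖B‖ * ‖B‖ ≤ √(Fintype.card n) * ‖H‖ * ‖B‖ :=
    calc lam * ‖B‖ * ‖B‖ ≤ ‖H * B‖ ^ 2 + lam * ‖B‖ ^ 2 := by nlinarith [sq_nonneg ‖H * B‖]
      _ = (B * H).trace.re := norm_mul_tikhonovInverse_sq_add hA
      _ ≤ √(Fintype.card n) * ‖B * H‖ := re_trace_le_sqrt_card_mul_norm _
      _ ≤ √(Fintype.card n) * ‖H‖ * ‖B‖ := by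
        rw [mul_assoc, mul_comm ‖H‖]; gcongr; exact frobenius_norm_mul B H
  rcases (norm_nonneg B).eq_or_lt with hB | hB
  · rw [← hB, mul_zero]; positivity
  · exact le_of_mul_le_mul_right key hB

end

theorem stmt0_general (K N : ℕ)
    (H : Matrix (Fin K) (Fin N) ℂ) (D : Matrix (Fin K) (Fin K) ℂ)
    (hD : frobSq D ≤ frobSq H)
    (Pw Pmax lam : ℝ) (hPmax : 0 < Pmax)
    (hinv : IsUnit (Hᴴ * H + (lam : ℂ) • (1 : Matrix (Fin N) (Fin N) ℂ)))
    (hV : frobSq ((Real.sqrt Pw : ℂ) •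
        ((Hᴴ * H + (lam : ℂ) • (1 : Matrix (Fin N) (Fin N) ℂ))⁻¹ * Hᴴ * D)) = Pmax) :
    lam ≤ frobSq H * Real.sqrt ((N : ℝ) * Pw / Pmax) := by
  change frobSq ((√Pw : ℂ) • (tikhonovInverse H lam * D)) = Pmax at hV
  set B := tikhonovInverse H lam
  rw [frobSq_eq_norm_sq, norm_smul, Complex.norm_real, Real.norm_of_nonneg (Real.sqrt_nonneg _)]
    at hV
  rw [frobSq_eq_norm_sq, frobSq_eq_norm_sq, sq_le_sq₀ (norm_nonneg _) (norm_nonneg _)] at hD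
  rw [frobSq_eq_norm_sq]
  have hPmax_le : √Pmax ≤ ‖B‖ * (√Pw * ‖H‖) := by
    rw [← hV, Real.sqrt_sq (by positivity), mul_left_comm]
    gcongr
    exact (frobenius_norm_mul B D).trans (by gcongr)
  have hB : 0 < ‖B‖ :=
    pos_of_mul_pos_left ((Real.sqrt_pos.mpr hPmax).trans_le hPmax_le) (by positivity)
  have hlam_le : lam * ‖B‖ ≤ √N * ‖H‖ := by
    simpa using mul_norm_tikhonovInverse_le hinv
  calc lam ≤ √N * ‖H‖ * ‖B‖⁻¹ := by rw [← div_eq_mul_inv, le_div_iff₀ hB]; exact hlam_le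
    _ ≤ √N * ‖H‖ * (√Pw * ‖H‖ / √Pmax) := by
      gcongr
      rwa [le_div_iff₀ (Real.sqrt_pos.mpr hPmax), inv_mul_le_iff₀ hB]
    _ = ‖H‖ ^ 2 * √(N * Pw / Pmax) := by
      rw [Real.sqrt_div' _ hPmax.le, Real.sqrt_mul (Nat.cast_nonneg N)]; ring

/-- Paper's Proposition 1: the optimal Lagrange multiplier of the single-cell
precoding deviation minimization problem satisfies
`λ° ≤ ‖H‖_F² √(N P^w / P^max)`. -/
theorem stmt0 (K N : ℕ) (hK : 0 < K) (hN : 0 < N)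
    (H : Matrix (Fin K) (Fin N) ℂ) (D : Matrix (Fin K) (Fin K) ℂ)
    (hD : frobSq D ≤ frobSq H)
    (Pw Pmax lam : ℝ) (hPw : 0 < Pw) (hPmax : 0 < Pmax) (hlam : 0 < lam)
    (hinv : IsUnit (Hᴴ * H + (lam : ℂ) • (1 : Matrix (Fin N) (Fin N) ℂ)))
    (hV : frobSq ((Real.sqrt Pw : ℂ) •
        ((Hᴴ * H + (lam : ℂ) • (1 : Matrix (Fin N) (Fin N) ℂ))⁻¹ * Hᴴ * D)) = Pmax) :
    lam ≤ frobSq H * Real.sqrt ((N : ℝ) * Pw / Pmax) :=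
  stmt0_general K N H D hD Pw Pmax lam hPmax hinv hV
end

section
/- Let A ∈ ℂ^{K̄×N}, B ∈ ℂ^{K̄×K}, P^max > 0, and for each l in a finite index set L let A_l ∈ ℂ^{K_l×N}. Define ρ(V) = ‖AV − B‖_F², f(V) = Σ_{l∈L} ‖A_l V‖_F², and S = {V : ‖V‖_F² ≤ P^max}. Suppose δ ∈ ℝ, ν ≥ 0, μ ≥ 0, and V° ∈ ℂ^{N×K} satisfy the KKT conditions: ρ(V°) ≤ δ, ‖V°‖_F² ≤ P^max, ν·(ρ(V°) − δ) = 0, μ·(‖V°‖_F² − P^max) = 0, and V° minimizes V ↦ f(V) + ν·ρ(V) + μ·‖V‖_F² over all of ℂ^{N×K}. Then, with θ = ν/(1+ν) ∈ [0,1), V° minimizes the weighted objective (1−θ)f(V) + θρ(V) over S. (One direction of the paper's Lemma 3: any optimal solution of the constrained leakage problem P^lk_c(δ_c) with dual optimal multiplier ν_c°(δ_c) is an optimal solution of the weighted problem P^w_c(θ_c) with θ_c = ν_c°(δ_c)/(1+ν_c°(δ_c)).) -/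
open Matrix BigOperators

/-! Complementary slackness makes the power penalty `μ‖V‖²` no larger at any feasible `V` than
at `V°`, so `V°` minimizes `f + νρ` over `S`; dividing by `1 + ν` turns this objective into
`(1 - θ) f + θ ρ` with `θ = ν / (1 + ν)`. -/

theorem one_sub_div_one_add_mul_add {𝕜 : Type*} [Field 𝕜] (a b ν : 𝕜) (hν : 1 + ν ≠ 0) :
    (1 - ν / (1 + ν)) * a + ν / (1 + ν) * b = (a + ν * b) / (1 + ν) := by
  field_simp
  ring

section OrderedField

variable {𝕜 : Type*} [Field 𝕜] [LinearOrder 𝕜] [IsStrictOrderedRing 𝕜]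

theorem mul_le_mul_of_complementary_slackness {μ g g₀ P : 𝕜} (hμ : 0 ≤ μ)
    (hcs : μ * (g₀ - P) = 0) (hg : g ≤ P) : μ * g ≤ μ * g₀ := by
  have hg₀ : μ * g₀ = μ * P := by linear_combination hcs
  rw [hg₀]
  exact mul_le_mul_of_nonneg_left hg hμ

theorem le_of_minimizes_lagrangian {α : Type*} {f ρ p : α → 𝕜} {ν μ P : 𝕜} {x₀ : α}
    (hμ : 0 ≤ μ) (hcs : μ * (p x₀ - P) = 0)
    (hmin : ∀ x, f x₀ + ν * ρ x₀ + μ * p x₀ ≤ f x + ν * ρ x + μ * p x)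
    {x : α} (hx : p x ≤ P) : f x₀ + ν * ρ x₀ ≤ f x + ν * ρ x := by
  linarith [hmin x, mul_le_mul_of_complementary_slackness hμ hcs hx]

end OrderedField

theorem stmt9_general (Kb N K : ℕ) (A : Matrix (Fin Kb) (Fin N) ℂ) (B : Matrix (Fin Kb) (Fin K) ℂ)
    (Pmax : ℝ)
    (L : Type*) [Fintype L] (Kl : L → ℕ) (Al : ∀ l : L, Matrix (Fin (Kl l)) (Fin N) ℂ)
    (ν μ : ℝ) (hν : 0 ≤ ν) (hμ : 0 ≤ μ)
    (V₀ : Matrix (Fin N) (Fin K) ℂ)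
    (hcs2 : μ * (frobSq V₀ - Pmax) = 0)
    (hLag : ∀ V : Matrix (Fin N) (Fin K) ℂ,
      (∑ l, frobSq (Al l * V₀)) + ν * frobSq (A * V₀ - B) + μ * frobSq V₀ ≤
        (∑ l, frobSq (Al l * V)) + ν * frobSq (A * V - B) + μ * frobSq V) :
    (0 : ℝ) ≤ ν / (1 + ν) ∧ ν / (1 + ν) < 1 ∧
    ∀ V : Matrix (Fin N) (Fin K) ℂ, frobSq V ≤ Pmax →
      (1 - ν / (1 + ν)) * (∑ l, frobSq (Al l * V₀))
          + (ν / (1 + ν)) * frobSq (A * V₀ - B) ≤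
        (1 - ν / (1 + ν)) * (∑ l, frobSq (Al l * V))
          + (ν / (1 + ν)) * frobSq (A * V - B) := by
  have h1ν : 0 < 1 + ν := by linarith
  refine ⟨div_nonneg hν h1ν.le, (div_lt_one h1ν).2 (by linarith), fun V hV => ?_⟩
  have hmin : (∑ l, frobSq (Al l * V₀)) + ν * frobSq (A * V₀ - B) ≤
      (∑ l, frobSq (Al l * V)) + ν * frobSq (A * V - B) :=
    le_of_minimizes_lagrangian (f := fun W : Matrix (Fin N) (Fin K) ℂ => ∑ l, frobSq (Al l * W))
      (ρ := fun W : Matrix (Fin N) (Fin K) ℂ => frobSq (A * W - B)) hμ hcs2 hLag hV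
  rw [one_sub_div_one_add_mul_add _ _ _ h1ν.ne', one_sub_div_one_add_mul_add _ _ _ h1ν.ne']
  exact div_le_div_of_nonneg_right hmin h1ν.le

/-- One direction of the paper's Lemma 3: if `(V°, ν, μ)` satisfies the KKT
conditions of the constrained leakage problem `P^lk(δ)`, then with
`θ = ν/(1+ν) ∈ [0,1)`, `V°` minimizes the weighted objective
`(1−θ)f + θρ` over the power constraint set `S`. -/
theorem stmt9 (Kb N K : ℕ) (A : Matrix (Fin Kb) (Fin N) ℂ) (B : Matrix (Fin Kb) (Fin K) ℂ)
    (Pmax : ℝ) (hPmax : 0 < Pmax)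
    (L : Type*) [Fintype L] (Kl : L → ℕ) (Al : ∀ l : L, Matrix (Fin (Kl l)) (Fin N) ℂ)
    (δ ν μ : ℝ) (hν : 0 ≤ ν) (hμ : 0 ≤ μ)
    (V₀ : Matrix (Fin N) (Fin K) ℂ)
    (hρ : frobSq (A * V₀ - B) ≤ δ)
    (hS : frobSq V₀ ≤ Pmax)
    (hcs1 : ν * (frobSq (A * V₀ - B) - δ) = 0)
    (hcs2 : μ * (frobSq V₀ - Pmax) = 0)
    (hLag : ∀ V : Matrix (Fin N) (Fin K) ℂ,
      (∑ l, frobSq (Al l * V₀)) + ν * frobSq (A * V₀ - B) + μ * frobSq V₀ ≤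
        (∑ l, frobSq (Al l * V)) + ν * frobSq (A * V - B) + μ * frobSq V) :
    (0 : ℝ) ≤ ν / (1 + ν) ∧ ν / (1 + ν) < 1 ∧
    ∀ V : Matrix (Fin N) (Fin K) ℂ, frobSq V ≤ Pmax →
      (1 - ν / (1 + ν)) * (∑ l, frobSq (Al l * V₀))
          + (ν / (1 + ν)) * frobSq (A * V₀ - B) ≤
        (1 - ν / (1 + ν)) * (∑ l, frobSq (Al l * V))
          + (ν / (1 + ν)) * frobSq (A * V - B) :=
  stmt9_general Kb N K A B Pmax L Kl Al ν μ hν hμ V₀ hcs2 hLag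
end

section
/- Let C be a positive integer, fix c ∈ {1,…,C}, let θ ∈ (0,1), and for each l ∈ {1,…,C} let A_l ∈ ℂ^{K_l×N}. Let D_c ∈ ℂ^{K_c×K_c}, let β_c = 1 and β_l = √((1−θ)/θ) for l ≠ c, let H^eff be the vertical stack of the blocks β_l A_l, and let D̃ be the matrix whose block row c equals D_c and whose other block rows are zero. Suppose H^eff (H^eff)ᴴ is invertible and set G = (H^eff)ᴴ(H^eff(H^eff)ᴴ)⁻¹D̃ with G ≠ 0, P^{w∘} = min{P^max/‖G‖_F², P^max} for P^max > 0. Then V° = √(P^{w∘}) G satisfies ‖V°‖_F² ≤ P^max, A_l V° = 0 for every l ≠ c (zero signal leakage to all other cells), and A_c V° = √(P^{w∘}) D_c (zero precoding deviation). (The paper's complete-service-isolation claim: when N_c ≥ K, the InP's closed-form precoder (25) with virtual power (30) nulls all inter-cell leakage while exactly meeting the SPs' demands.) -/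
open Matrix BigOperators

/-- The paper's complete-service-isolation claim: the closed-form precoder (25)
with virtual power (30), `V° = √(P^{w∘}) (H^eff)ᴴ(H^eff(H^eff)ᴴ)⁻¹D̃`, is
feasible, nulls all inter-cell leakage (`A_l V° = 0` for `l ≠ c`) and exactly
meets the demand (`A_c V° = √(P^{w∘}) D_c`). -/
theorem stmt15 (C N : ℕ) (hC : 0 < C) (c : Fin C)
    (θ : ℝ) (hθ0 : 0 < θ) (hθ1 : θ < 1)
    (Kl : Fin C → ℕ) (A : ∀ l : Fin C, Matrix (Fin (Kl l)) (Fin N) ℂ)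
    (Dc : Matrix (Fin (Kl c)) (Fin (Kl c)) ℂ)
    (β : Fin C → ℝ) (hβc : β c = 1)
    (hβ : ∀ l : Fin C, l ≠ c → β l = Real.sqrt ((1 - θ) / θ))
    (Heff : Matrix ((l : Fin C) × Fin (Kl l)) (Fin N) ℂ)
    (hHeff : Heff = Matrix.of fun p j => (β p.1 : ℂ) * A p.1 p.2 j)
    (Dt : Matrix ((l : Fin C) × Fin (Kl l)) (Fin (Kl c)) ℂ)
    (hDt : Dt = Matrix.of fun p j =>
      if h : p.1 = c then Dc (Fin.cast (congrArg Kl h) p.2) j else 0)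
    (hinv : IsUnit (Heff * Heffᴴ))
    (G : Matrix (Fin N) (Fin (Kl c)) ℂ)
    (hGdef : G = Heffᴴ * (Heff * Heffᴴ)⁻¹ * Dt) (hG : G ≠ 0)
    (Pmax : ℝ) (hPmax : 0 < Pmax)
    (Pw : ℝ) (hPwdef : Pw = min (Pmax / frobSq G) Pmax) :
    frobSq ((Real.sqrt Pw : ℂ) • G) ≤ Pmax ∧
    (∀ l : Fin C, l ≠ c → A l * ((Real.sqrt Pw : ℂ) • G) = 0) ∧
    A c * ((Real.sqrt Pw : ℂ) • G) = (Real.sqrt Pw : ℂ) • Dc := by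
  -- frobSq G positivity
  have hfnn : 0 ≤ frobSq G := by
    apply Finset.sum_nonneg; intro i _; apply Finset.sum_nonneg; intro j _; positivity
  have hfpos : 0 < frobSq G := by
    rcases hfnn.lt_or_eq with h | h
    · exact h
    · exfalso; apply hG
      ext i j
      have h1 : ∀ i ∈ Finset.univ, (∑ j, ‖G i j‖ ^ 2) = 0 := by
        have := (Finset.sum_eq_zero_iff_of_nonneg (fun i _ => Finset.sum_nonneg
          (fun j _ => by positivity))).mp h.symm
        exact this
      have h2 := (Finset.sum_eq_zero_iff_of_nonneg (fun j _ => by positivity)).mp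
        (h1 i (Finset.mem_univ i)) j (Finset.mem_univ j)
      have : ‖G i j‖ = 0 := by nlinarith [norm_nonneg (G i j)]
      simpa using this
  have hPw0 : 0 ≤ Pw := by
    rw [hPwdef]; exact le_min (by positivity) hPmax.le
  -- frobSq of scalar multiple
  have hscal : frobSq ((Real.sqrt Pw : ℂ) • G) = Pw * frobSq G := by
    unfold frobSq
    rw [Finset.mul_sum]
    congr 1; ext i
    rw [Finset.mul_sum]
    congr 1; ext j
    have : ((Real.sqrt Pw : ℂ) • G) i j = (Real.sqrt Pw : ℂ) * G i j := rfl
    rw [this, norm_mul, mul_pow, Complex.norm_real, Real.norm_eq_abs, sq_abs,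
      Real.sq_sqrt hPw0]
  -- feasibility
  have hfeas : frobSq ((Real.sqrt Pw : ℂ) • G) ≤ Pmax := by
    rw [hscal]
    have h1 : Pw ≤ Pmax / frobSq G := by rw [hPwdef]; exact min_le_left _ _
    calc Pw * frobSq G ≤ (Pmax / frobSq G) * frobSq G :=
          mul_le_mul_of_nonneg_right h1 hfnn
      _ = Pmax := div_mul_cancel₀ _ (ne_of_gt hfpos)
  -- key identity Heff * G = Dt
  have hHG : Heff * G = Dt := by
    rw [hGdef, ← Matrix.mul_assoc, ← Matrix.mul_assoc,
      Matrix.mul_nonsing_inv _ ((Matrix.isUnit_iff_isUnit_det _).mp hinv), Matrix.one_mul]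
  have hblock : ∀ (l : Fin C) (i : Fin (Kl l)) (j : Fin (Kl c)),
      (β l : ℂ) * (A l * G) i j = Dt ⟨l, i⟩ j := by
    intro l i j
    have h := congrFun (congrFun hHG ⟨l, i⟩) j
    rw [hHeff] at h
    simpa [Matrix.mul_apply, Finset.mul_sum, mul_assoc] using h
  refine ⟨hfeas, ?_, ?_⟩
  · intro l hl
    have hβl : (β l : ℂ) ≠ 0 := by
      rw [hβ l hl]
      have : (0:ℝ) < Real.sqrt ((1 - θ) / θ) :=
        Real.sqrt_pos.mpr (div_pos (by linarith) hθ0)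
      exact_mod_cast ne_of_gt this
    have hAG : A l * G = 0 := by
      ext i j
      have h := hblock l i j
      rw [hDt] at h
      simp only [Matrix.of_apply, dif_neg hl] at h
      have := mul_eq_zero.mp h
      simpa [hβl] using this
    rw [Matrix.mul_smul, hAG, smul_zero]
  · have hAG : A c * G = Dc := by
      ext i j
      have h := hblock c i j
      rw [hDt, hβc] at h
      simpa using h
    rw [Matrix.mul_smul, hAG]
end
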